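/- arXiv:1705.07731 — 4 statements merged into one kernel-verified Lean document; each statement's English description precedes it below -/
import Mathlib

section
/- Let f₃(x,y) = 1 + 3xy - 8x³y + 5x⁵y. Then along the Abel differential equation dy/dx = p(x)y² + q(x)y³ with p(x) = 40x⁴ - 30x² + 2 and q(x) = 75x⁹ - 150x⁷ + 88x⁵ - 10x³ - 3x, the curve f₃ = 0 is invariant: there exists a polynomial cofactor K(x,y) such that ∂f₃/∂x + (p(x)y² + q(x)y³)·∂f₃/∂y = K(x,y)·f₃(x,y). -/
open MvPolynomial

noncomputable def x : MvPolynomial (Fin 2) ℝ := X 0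
noncomputable def y : MvPolynomial (Fin 2) ℝ := X 1

noncomputable def pP : MvPolynomial (Fin 2) ℝ := 40*x^4 - 30*x^2 + 2
noncomputable def qP : MvPolynomial (Fin 2) ℝ := 75*x^9 - 150*x^7 + 88*x^5 - 10*x^3 - 3*x

noncomputable def f₃ : MvPolynomial (Fin 2) ℝ := 1 + 3*x*y - 8*x^3*y + 5*x^5*y

lemma pderiv_nat (i : Fin 2) (n : ℕ) [n.AtLeastTwo] :
    pderiv i (no_index (OfNat.ofNat n) : MvPolynomial (Fin 2) ℝ) = 0 := by
  have : (OfNat.ofNat n : MvPolynomial (Fin 2) ℝ) = C (OfNat.ofNat n : ℝ) := by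
    simp [OfNat.ofNat]
  rw [this]; exact pderiv_C

lemma pderiv0_f₃ : pderiv 0 f₃ = (3 - 24*x^2 + 25*x^4)*y := by
  simp [f₃, x, y, pderiv_nat, Derivation.leibniz, Derivation.leibniz_pow,
    pderiv_X, Pi.single_apply]
  ring

lemma pderiv1_f₃ : pderiv 1 f₃ = 3*x - 8*x^3 + 5*x^5 := by
  simp [f₃, x, y, pderiv_nat, Derivation.leibniz, Derivation.leibniz_pow,
    pderiv_X, Pi.single_apply]

theorem f3_invariant :
    ∃ K : MvPolynomial (Fin 2) ℝ,
      pderiv 0 f₃ + (pP * y^2 + qP * y^3) * pderiv 1 f₃ = K * f₃ := by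
  use (3 - 24*x^2 + 25*x^4)*y + qP*y^2
  rw [pderiv0_f₃, pderiv1_f₃]
  simp only [f₃, pP, qP, x, y]
  ring
end

section
/- If there exist polynomials w, p₁, q₁ ∈ ℝ[x] with w(a) = w(b), p̃ = p₁ ∘ w, and q̃ = q₁ ∘ w (where p̃, q̃ are antiderivatives of p, q vanishing at a), then for all nonnegative integers m, n: ∫_a^b p̃(x)^m q̃(x)^n p(x) dx = 0 and ∫_a^b p̃(x)^m q̃(x)^n q(x) dx = 0. -/
open MeasureTheory Polynomial

lemma eq_deriv_of_integral_eq {f F : ℝ → ℝ} {a : ℝ} (hf : Continuous f)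
    (hF : ∀ x, (∫ σ in a..x, f σ) = F x) (x : ℝ) : f x = deriv F x := by
  rw [← funext hF, hf.deriv_integral]

lemma integral_comp_mul_deriv_eq_zero {g w w' : ℝ → ℝ} {a b : ℝ}
    (hw : ∀ x, HasDerivAt w (w' x) x) (hw' : Continuous w') (hg : Continuous g)
    (hab : w a = w b) : ∫ x in a..b, g (w x) * w' x = 0 := by
  have := intervalIntegral.integral_comp_mul_deriv (a := a) (b := b) (fun x _ => hw x)
    hw'.continuousOn hg
  rwa [hab, intervalIntegral.integral_same] at this

lemma eval_eq_eval_derivative_comp_mul {r w r₁ : ℝ[X]} {a : ℝ}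
    (hr : ∀ x : ℝ, (∫ σ in a..x, r.eval σ) = r₁.eval (w.eval x)) (x : ℝ) :
    r.eval x = (derivative r₁).eval (w.eval x) * (derivative w).eval x := by
  rw [eq_deriv_of_integral_eq r.continuous hr]
  exact ((r₁.hasDerivAt _).comp x (w.hasDerivAt x)).deriv

/-- Each integrand is `g (w x) * w' x` with `g = p₁ ^ m * q₁ ^ n * r₁'`, so the substitution
`u = w x` turns the integral into one over the degenerate interval `[w a, w b]`. -/
lemma integral_pow_mul_pow_mul_eq_zero {p q r w p₁ q₁ r₁ : ℝ[X]} {a b : ℝ}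
    (hw : w.eval a = w.eval b)
    (hp : ∀ x : ℝ, (∫ σ in a..x, p.eval σ) = p₁.eval (w.eval x))
    (hq : ∀ x : ℝ, (∫ σ in a..x, q.eval σ) = q₁.eval (w.eval x))
    (hr : ∀ x : ℝ, (∫ σ in a..x, r.eval σ) = r₁.eval (w.eval x)) (m n : ℕ) :
    (∫ x in a..b, (∫ σ in a..x, p.eval σ)^m * (∫ σ in a..x, q.eval σ)^n * r.eval x) = 0 := by
  have hg : Continuous fun u => p₁.eval u ^ m * q₁.eval u ^ n * (derivative r₁).eval u := by
    fun_prop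
  simp_rw [hp, hq, eval_eq_eval_derivative_comp_mul hr, ← mul_assoc]
  exact integral_comp_mul_deriv_eq_zero (fun x => w.hasDerivAt x) (derivative w).continuous hg hw

theorem composition_implies_moments_vanish_general
    (p q : Polynomial ℝ) (a b : ℝ)
    (w p₁ q₁ : Polynomial ℝ)
    (hw : w.eval a = w.eval b)
    (hp : ∀ x : ℝ, (∫ σ in a..x, p.eval σ) = p₁.eval (w.eval x))
    (hq : ∀ x : ℝ, (∫ σ in a..x, q.eval σ) = q₁.eval (w.eval x)) :
    ∀ m n : ℕ,
      (∫ x in a..b, (∫ σ in a..x, p.eval σ)^m * (∫ σ in a..x, q.eval σ)^n * p.eval x) = 0 ∧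
      (∫ x in a..b, (∫ σ in a..x, p.eval σ)^m * (∫ σ in a..x, q.eval σ)^n * q.eval x) = 0 :=
  fun m n => ⟨integral_pow_mul_pow_mul_eq_zero hw hp hq hp m n,
    integral_pow_mul_pow_mul_eq_zero hw hp hq hq m n⟩

theorem composition_implies_moments_vanish
    (p q : Polynomial ℝ) (a b : ℝ) (hab : a < b)
    (w p₁ q₁ : Polynomial ℝ)
    (hw : w.eval a = w.eval b)
    (hp : ∀ x : ℝ, (∫ σ in a..x, p.eval σ) = p₁.eval (w.eval x))
    (hq : ∀ x : ℝ, (∫ σ in a..x, q.eval σ) = q₁.eval (w.eval x)) :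
    ∀ m n : ℕ,
      (∫ x in a..b, (∫ σ in a..x, p.eval σ)^m * (∫ σ in a..x, q.eval σ)^n * p.eval x) = 0 ∧
      (∫ x in a..b, (∫ σ in a..x, p.eval σ)^m * (∫ σ in a..x, q.eval σ)^n * q.eval x) = 0 :=
  composition_implies_moments_vanish_general p q a b w p₁ q₁ hw hp hq
end

section
/- If the composition condition holds for the Abel equation dy/dx = p(x)y² + q(x)y³ on [a,b] — i.e. there exist polynomials w, p₁, q₁ with w(a)=w(b), p̃ = p₁∘w, q̃ = q₁∘w — then every iterated integral I_{i₁,…,i_k} = ∫···∫_{a ≤ s₁ ≤ ··· ≤ s_k ≤ b} a_{i_k}(s_k)···a_{i₁}(s₁) ds_k···ds₁ vanishes, where a₁ = p and a₂ = q and k ≥ 1. -/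
open MeasureTheory

/-- Iterated integral over the simplex `a ≤ s₁ ≤ ⋯ ≤ s_k ≤ t`:
the list is `[a_{i_k}, …, a_{i_1}]`, outermost variable first. -/
noncomputable def iterInt (a : ℝ) : List (ℝ → ℝ) → ℝ → ℝ
  | [], _ => 1
  | f :: rest, t => ∫ s in a..t, f s * iterInt a rest s

/-!
The composition condition says `p = (p₁ ∘ w)'` and `q = (q₁ ∘ w)'`. By induction on the length,
an iterated integral of such factors is `t ↦ P (w t)` for a polynomial `P`: the integrand
`(R ∘ w)' · (Q ∘ w)` is the derivative of `T ∘ w` for any `T` with `T' = Q · R'`. So the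
outermost integral equals `T (w b) - T (w a)`, which vanishes because `w a = w b`.
-/

open Polynomial

lemma Polynomial.exists_derivative_eq {K : Type*} [Field K] [CharZero K] (S : K[X]) :
    ∃ T : K[X], derivative T = S := by
  induction S using Polynomial.induction_on' with
  | add S₁ S₂ h₁ h₂ =>
    obtain ⟨T₁, rfl⟩ := h₁
    obtain ⟨T₂, rfl⟩ := h₂
    exact ⟨T₁ + T₂, derivative_add⟩
  | monomial n c =>
    refine ⟨C (c / (n + 1)) * X ^ (n + 1), ?_⟩
    rw [derivative_C_mul, derivative_X_pow, Nat.add_sub_cancel, Nat.cast_add, Nat.cast_one,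
      ← mul_assoc, ← C_mul, div_mul_cancel₀ _ (Nat.cast_add_one_ne_zero n), C_mul_X_pow_eq_monomial]

lemma Polynomial.integral_eval_derivative (P : ℝ[X]) (a t : ℝ) :
    ∫ s in a..t, (derivative P).eval s = P.eval t - P.eval a :=
  intervalIntegral.integral_eq_sub_of_hasDerivAt (fun x _ => P.hasDerivAt x)
    ((derivative P).continuous.intervalIntegrable _ _)

lemma derivative_comp_eq_of_integral_eq {r R w : ℝ[X]} {a : ℝ}
    (h : ∀ x, ∫ σ in a..x, r.eval σ = R.eval (w.eval x)) : derivative (R.comp w) = r := by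
  refine Polynomial.funext fun x => ?_
  calc (derivative (R.comp w)).eval x
      = deriv (fun u => ∫ σ in a..u, r.eval σ) x := by
        simp only [h, ← eval_comp, Polynomial.deriv]
    _ = r.eval x := r.continuous.deriv_integral _ a x

section

variable {a : ℝ} {w : ℝ[X]}

lemma iterInt_derivative_comp_cons {Q R T : ℝ[X]} {rest : List (ℝ → ℝ)}
    (hQ : ∀ t, iterInt a rest t = Q.eval (w.eval t)) (hT : derivative T = Q * derivative R)
    (t : ℝ) :
    iterInt a ((fun s => (derivative (R.comp w)).eval s) :: rest) t
      = T.eval (w.eval t) - T.eval (w.eval a) := by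
  have hder : derivative (T.comp w) = derivative (R.comp w) * Q.comp w := by
    rw [derivative_comp, derivative_comp, hT, mul_comp]
    ring
  simp only [iterInt, hQ, ← eval_comp, ← eval_mul, ← hder]
  exact integral_eval_derivative _ a t

lemma exists_iterInt_eq_eval_comp {l : List (ℝ → ℝ)}
    (hl : ∀ f ∈ l, ∃ R : ℝ[X], f = fun s => (derivative (R.comp w)).eval s) :
    ∃ P : ℝ[X], ∀ t, iterInt a l t = P.eval (w.eval t) := by
  induction l with
  | nil => exact ⟨1, fun t => by simp [iterInt]⟩
  | cons f rest ih =>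
    obtain ⟨Q, hQ⟩ := ih fun g hg => hl g (List.mem_cons_of_mem f hg)
    obtain ⟨R, rfl⟩ := hl f List.mem_cons_self
    obtain ⟨T, hT⟩ := exists_derivative_eq (Q * derivative R)
    refine ⟨T - C (T.eval (w.eval a)), fun t => ?_⟩
    rw [iterInt_derivative_comp_cons hQ hT, eval_sub, eval_C]

lemma iterInt_eq_zero_of_eval_eq {b : ℝ} (hw : w.eval a = w.eval b) {l : List (ℝ → ℝ)}
    (hne : l ≠ [])
    (hl : ∀ f ∈ l, ∃ R : ℝ[X], f = fun s => (derivative (R.comp w)).eval s) :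
    iterInt a l b = 0 := by
  obtain ⟨f, rest, rfl⟩ := List.exists_cons_of_ne_nil hne
  obtain ⟨Q, hQ⟩ := exists_iterInt_eq_eval_comp fun g hg => hl g (List.mem_cons_of_mem f hg)
  obtain ⟨R, rfl⟩ := hl f List.mem_cons_self
  obtain ⟨T, hT⟩ := exists_derivative_eq (Q * derivative R)
  rw [iterInt_derivative_comp_cons hQ hT, hw, sub_self]

end

theorem composition_implies_universal_center_general
    (p q : Polynomial ℝ) (a b : ℝ)
    (w p₁ q₁ : Polynomial ℝ)
    (hw : w.eval a = w.eval b)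
    (hp : ∀ x : ℝ, (∫ σ in a..x, p.eval σ) = p₁.eval (w.eval x))
    (hq : ∀ x : ℝ, (∫ σ in a..x, q.eval σ) = q₁.eval (w.eval x)) :
    ∀ l : List (ℝ → ℝ), l ≠ [] →
      (∀ f ∈ l, f = (fun s => p.eval s) ∨ f = (fun s => q.eval s)) →
      iterInt a l b = 0 := by
  intro l hne hl
  refine iterInt_eq_zero_of_eval_eq hw hne fun f hf => ?_
  rcases hl f hf with rfl | rfl
  · exact ⟨p₁, by rw [derivative_comp_eq_of_integral_eq hp]⟩
  · exact ⟨q₁, by rw [derivative_comp_eq_of_integral_eq hq]⟩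

theorem composition_implies_universal_center
    (p q : Polynomial ℝ) (a b : ℝ) (hab : a < b)
    (w p₁ q₁ : Polynomial ℝ)
    (hw : w.eval a = w.eval b)
    (hp : ∀ x : ℝ, (∫ σ in a..x, p.eval σ) = p₁.eval (w.eval x))
    (hq : ∀ x : ℝ, (∫ σ in a..x, q.eval σ) = q₁.eval (w.eval x)) :
    ∀ l : List (ℝ → ℝ), l ≠ [] →
      (∀ f ∈ l, f = (fun s => p.eval s) ∨ f = (fun s => q.eval s)) →
      iterInt a l b = 0 :=
  composition_implies_universal_center_general p q a b w p₁ q₁ hw hp hq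
end

section
/- Suppose there exist differentiable functions w : [a,b] → ℝ with w(a) = w(b), and differentiable p₁, q₁ : ℝ → ℝ, such that p̃(x) = p₁(w(x)) and q̃(x) = q₁(w(x)) for all x ∈ [a,b]. If Y is a solution of dY/dw = p₁'(w)Y² + q₁'(w)Y³, then y(x) := Y(w(x)) is a solution of dy/dx = p(x)y² + q(x)y³, and consequently every solution y with y(x) = Y(w(x)) satisfies y(a) = y(b). -/
open MeasureTheory Set Topology

theorem composition_implies_solutions_return
    (a b : ℝ) (hab : a < b)
    (p q : ℝ → ℝ) (hp : ContinuousOn p (Icc a b)) (hq : ContinuousOn q (Icc a b))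
    (w w' : ℝ → ℝ) (hwab : w a = w b)
    (hw : ∀ x ∈ Icc a b, HasDerivAt w (w' x) x)
    (p₁ q₁ : ℝ → ℝ) (hp₁ : Differentiable ℝ p₁) (hq₁ : Differentiable ℝ q₁)
    (hcompp : ∀ x ∈ Icc a b, (∫ σ in a..x, p σ) = p₁ (w x))
    (hcompq : ∀ x ∈ Icc a b, (∫ σ in a..x, q σ) = q₁ (w x))
    (Y : ℝ → ℝ)
    (hY : ∀ u : ℝ, HasDerivAt Y (deriv p₁ u * (Y u)^2 + deriv q₁ u * (Y u)^3) u) :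
    (∀ x ∈ Icc a b,
      HasDerivAt (fun t => Y (w t)) (p x * (Y (w x))^2 + q x * (Y (w x))^3) x) ∧
    Y (w a) = Y (w b) := by
  constructor
  · intro x hx
    haveI : Fact (x ∈ Icc a b) := ⟨hx⟩
    have hU : UniqueDiffWithinAt ℝ (Icc a b) x := (uniqueDiffOn_Icc hab) x hx
    have keyfun : ∀ (r r₁ : ℝ → ℝ), ContinuousOn r (Icc a b) → Differentiable ℝ r₁ →
        (∀ y ∈ Icc a b, (∫ σ in a..y, r σ) = r₁ (w y)) →
        deriv r₁ (w x) * w' x = r x := by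
      intro r r₁ hr hr₁ hcomp
      have hint : IntervalIntegrable r volume a x := by
        apply (hr.mono _).intervalIntegrable
        rw [uIcc_of_le hx.1]
        exact Icc_subset_Icc le_rfl hx.2
      have hmeas : StronglyMeasurableAtFilter r (𝓝[Icc a b] x) volume :=
        hr.stronglyMeasurableAtFilter_nhdsWithin measurableSet_Icc x
      have hF : HasDerivWithinAt (fun u => ∫ σ in a..u, r σ) (r x) (Icc a b) x :=
        intervalIntegral.integral_hasDerivWithinAt_right hint hmeas (hr x hx)
      have hF' : HasDerivWithinAt (fun t => r₁ (w t)) (r x) (Icc a b) x :=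
        hF.congr (fun y hy => (hcomp y hy).symm) (hcomp x hx).symm
      have hG : HasDerivWithinAt (fun t => r₁ (w t)) (deriv r₁ (w x) * w' x) (Icc a b) x :=
        ((hr₁ (w x)).hasDerivAt.comp x (hw x hx)).hasDerivWithinAt
      rw [← hG.derivWithin hU, hF'.derivWithin hU]
    have keyp := keyfun p p₁ hp hp₁ hcompp
    have keyq := keyfun q q₁ hq hq₁ hcompq
    have hcomp : HasDerivAt (fun t => Y (w t))
        ((deriv p₁ (w x) * (Y (w x))^2 + deriv q₁ (w x) * (Y (w x))^3) * w' x) x :=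
      (hY (w x)).comp x (hw x hx)
    convert hcomp using 1
    rw [← keyp, ← keyq]; ring
  · rw [hwab]
end
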